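/- Almost sure eventual containment: Suppose the rate-function family satisfies the growth conditions (G1) and (G2), I_θ(0) = 0 for all θ ∈ Θ, J : Θ → ℝ is uniformly continuous on bounded subsets of Θ, the LDP lower bound holds at every θ ∈ Θ, and either Θ is open in E or θ̂_T takes values in Θ for all T. Fix r > 0 and δ > 0. Let (H̲_T)_{T>0} and (H̄_T)_{T>0} be eventually equicontinuous families of Borel measurable functions E → ℝ satisfying, for every θ ∈ Θ, limsup_{T→∞} (1/b_T) log P_θ(J(θ) ∉ [H̲_T(θ̂_T), H̄_T(θ̂_T)]) ≤ −r. If θ0 ∈ Θ and θ̂_T → θ0 P_{θ0}-almost surely, then P_{θ0}-almost surely, limsup_{T→∞}(J̄^δ_{T,r}(θ̂_T) − H̄_T(θ̂_T)) ≤ 0 and liminf_{T→∞}(J̲^δ_{T,r}(θ̂_T) − H̲_T(θ̂_T)) ≥ 0. -/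

import Mathlib

set_option autoImplicit false

open Filter Topology Metric Set MeasureTheory

noncomputable section

variable {E : Type*} [NormedAddCommGroup E] [NormedSpace ℝ E]

/-- The sublevel set `S_{θ,r} = {ϑ ∈ E : I_θ(ϑ) ≤ r}` of the rate function. -/
def sublevelSet (I : E → E → ENNReal) (θ : E) (r : ℝ) : Set E :=
  {ϑ : E | I θ ϑ ≤ ENNReal.ofReal r}

/-- The open `δ`-fattening `S^δ_{θ,r}` of the sublevel set, where `S^0_{θ,r} = S_{θ,r}`;
for `δ > 0` it is the set of points at distance `< δ` from `S_{θ,r}`, i.e. the union of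
open balls of radius `δ` around points of `S_{θ,r}`. -/
def fatSublevel (I : E → E → ENNReal) (θ : E) (r δ : ℝ) : Set E :=
  if δ = 0 then sublevelSet I θ r
  else ⋃ ϑ ∈ sublevelSet I θ r, Metric.ball ϑ δ

/-- Growth condition (G1): for sequences `θ_n ∈ Θ` with `sup_n ‖θ_n‖ < ∞` and
`‖ϑ_n‖ → ∞`, `I_{θ_n}(ϑ_n) → ∞`. -/
def GrowthG1 (Θ : Set E) (I : E → E → ENNReal) : Prop :=
  ∀ θs ϑs : ℕ → E, (∀ n, θs n ∈ Θ) → (∃ C : ℝ, ∀ n, ‖θs n‖ ≤ C) →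
    Tendsto (fun n => ‖ϑs n‖) atTop atTop →
    Tendsto (fun n => I (θs n) (ϑs n)) atTop (nhds ⊤)

/-- Growth condition (G2): for sequences `θ_n ∈ Θ` with `‖θ_n‖ → ∞` and
`‖ϑ_n‖/‖θ_n‖ → ∞`, `limsup_n I_{θ_n}(ϑ_n) = ∞`. -/
def GrowthG2 (Θ : Set E) (I : E → E → ENNReal) : Prop :=
  ∀ θs ϑs : ℕ → E, (∀ n, θs n ∈ Θ) →
    Tendsto (fun n => ‖θs n‖) atTop atTop →
    Tendsto (fun n => ‖ϑs n‖ / ‖θs n‖) atTop atTop →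
    Filter.limsup (fun n => I (θs n) (ϑs n)) atTop = ⊤

/-- The upper confidence bound `J̄^δ_{T,r}(θ') = sup {J(θ) : θ ∈ Θ, a_T (θ' - θ) ∈ S^δ_{θ,r}}`. -/
def upperCB (Θ : Set E) (I : E → E → ENNReal) (J : E → ℝ) (r δ : ℝ) (a : ℝ → ℝ)
    (T : ℝ) (θ' : E) : ℝ :=
  sSup (J '' {θ : E | θ ∈ Θ ∧ a T • (θ' - θ) ∈ fatSublevel I θ r δ})

/-- The lower confidence bound `J̲^δ_{T,r}(θ') = inf {J(θ) : θ ∈ Θ, a_T (θ' - θ) ∈ S^δ_{θ,r}}`. -/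
def lowerCB (Θ : Set E) (I : E → E → ENNReal) (J : E → ℝ) (r δ : ℝ) (a : ℝ → ℝ)
    (T : ℝ) (θ' : E) : ℝ :=
  sInf (J '' {θ : E | θ ∈ Θ ∧ a T • (θ' - θ) ∈ fatSublevel I θ r δ})

variable {Ω : Type*} [MeasurableSpace Ω]

/-- LDP lower bound at `θ0` for the family `a_T (θ̂_T − θ0)` with speed `b_T`:
for every open `G ⊆ E`,
`liminf_{T→∞} (1/b_T) log P(a_T(θ̂_T − θ0) ∈ G) ≥ − inf_{ϑ ∈ G} I(ϑ)`. -/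
def LDPLowerAt (P : Measure Ω) (θhat : ℝ → Ω → E) (a b : ℝ → ℝ)
    (Irate : E → ENNReal) (θ0 : E) : Prop :=
  ∀ G : Set E, IsOpen G →
    -(((⨅ ϑ ∈ G, Irate ϑ) : ENNReal) : EReal) ≤
      Filter.liminf
        (fun T => (((b T)⁻¹ : ℝ) : EReal) *
          ENNReal.log (P {ω | a T • (θhat T ω - θ0) ∈ G})) atTop

/-- LDP upper bound at `θ0` for the family `a_T (θ̂_T − θ0)` with speed `b_T`:
for every closed `F ⊆ E`,
`limsup_{T→∞} (1/b_T) log P(a_T(θ̂_T − θ0) ∈ F) ≤ − inf_{ϑ ∈ F} I(ϑ)`. -/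
def LDPUpperAt (P : Measure Ω) (θhat : ℝ → Ω → E) (a b : ℝ → ℝ)
    (Irate : E → ENNReal) (θ0 : E) : Prop :=
  ∀ F : Set E, IsClosed F →
    Filter.limsup
      (fun T => (((b T)⁻¹ : ℝ) : EReal) *
        ENNReal.log (P {ω | a T • (θhat T ω - θ0) ∈ F})) atTop ≤
      -(((⨅ ϑ ∈ F, Irate ϑ) : ENNReal) : EReal)

/-- Eventual equi-upper semicontinuity at a point. -/
def EvEquiUSCAt {W : Type*} [PseudoMetricSpace W] (φ : ℝ → W → ℝ) (w0 : W) : Prop :=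
  ∀ ε > (0 : ℝ), ∃ δ > (0 : ℝ), ∃ T0 > (0 : ℝ),
    ∀ T ≥ T0, ∀ w ∈ Metric.closedBall w0 δ, φ T w - φ T w0 < ε

/-- Eventual equi-lower semicontinuity at a point: `(−φ_T)` is eventually equi-u.s.c. -/
def EvEquiLSCAt {W : Type*} [PseudoMetricSpace W] (φ : ℝ → W → ℝ) (w0 : W) : Prop :=
  EvEquiUSCAt (fun T w => -φ T w) w0

/-- Eventual equicontinuity at a point. -/
def EvEquicontinuousAt {W : Type*} [PseudoMetricSpace W] (φ : ℝ → W → ℝ) (w0 : W) : Prop :=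
  ∀ ε > (0 : ℝ), ∃ δ > (0 : ℝ), ∃ T0 > (0 : ℝ),
    ∀ T ≥ T0, ∀ w ∈ Metric.closedBall w0 δ, |φ T w - φ T w0| < ε

/-! The growth conditions force the sublevel sets `S_{θ,r}` to grow at most linearly in `‖θ‖`.
Hence every `θ` admitted by the confidence set at `θ'` satisfies `a_T ‖θ' - θ‖ = O(1 + ‖θ'‖)`, so
along `θ̂_T(ω) → θ0` the confidence sets shrink to `θ0`, and by continuity of `J` both `J̄` and `J̲`
converge to `J(θ0)`. On the other side, the LDP lower bound gives the `1/a_T`-ball around `θ0`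
probability `exp(-o(b_T))`, which beats the `exp(-r b_T)` bound on the failure of the interval;
so for large `T` some `θ̂_T(ω')` within `1/a_T` of `θ0` has `H̲_T(θ̂_T(ω')) ≤ J(θ0) ≤ H̄_T(θ̂_T(ω'))`,
and equicontinuity transfers this to `θ̂_T(ω)`. -/

def confidenceSet (Θ : Set E) (I : E → E → ENNReal) (r δ : ℝ) (a : ℝ → ℝ) (T : ℝ) (θ' : E) :
    Set E :=
  {θ : E | θ ∈ Θ ∧ a T • (θ' - θ) ∈ fatSublevel I θ r δ}

section RateFunction

variable {Θ : Set E} {I : E → E → ENNReal} {r δ : ℝ}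

omit [NormedSpace ℝ E] in
lemma exists_mem_sublevelSet_norm_sub_le_of_mem_fatSublevel {θ x : E}
    (hx : x ∈ fatSublevel I θ r δ) : ∃ ϑ ∈ sublevelSet I θ r, ‖x - ϑ‖ ≤ |δ| := by
  unfold fatSublevel at hx
  split_ifs at hx with hδ
  · exact ⟨x, hx, by simp⟩
  · obtain ⟨ϑ, hϑ, hxϑ⟩ := mem_iUnion₂.1 hx
    exact ⟨ϑ, hϑ, (mem_ball_iff_norm.1 hxϑ).le.trans (le_abs_self δ)⟩

omit [NormedSpace ℝ E] in
lemma zero_mem_fatSublevel {θ : E} (hI : I θ 0 = 0) (hδ : 0 ≤ δ) : 0 ∈ fatSublevel I θ r δ := by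
  have h0 : (0 : E) ∈ sublevelSet I θ r := by simp [sublevelSet, hI]
  unfold fatSublevel
  split_ifs with hδ0
  · exact h0
  · exact mem_iUnion₂.2 ⟨0, h0, mem_ball_self (hδ.lt_of_ne' hδ0)⟩

omit [NormedSpace ℝ E] in
lemma GrowthG1.tendsto_norm_atTop (hG1 : GrowthG1 Θ I) {θs ϑs : ℕ → E} (hθs : ∀ n, θs n ∈ Θ)
    (hϑs : ∀ n, ϑs n ∈ sublevelSet I (θs n) r) (hϑ : Tendsto (fun n => ‖ϑs n‖) atTop atTop) :
    Tendsto (fun n => ‖θs n‖) atTop atTop := by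
  refine tendsto_atTop.2 fun C => ?_
  by_contra hC
  obtain ⟨φ, hφ, hφC⟩ := extraction_of_frequently_atTop (not_eventually.1 hC)
  have hItop := hG1 (θs ∘ φ) (ϑs ∘ φ) (fun n => hθs _) ⟨C, fun n => (not_le.1 (hφC n)).le⟩
    (hϑ.comp hφ.tendsto_atTop)
  obtain ⟨n, hn⟩ := (hItop.eventually (lt_mem_nhds ENNReal.ofReal_lt_top)).exists
  exact (hϑs (φ n)).not_gt hn

omit [NormedSpace ℝ E] in
lemma GrowthG2.not_tendsto_norm_div (hG2 : GrowthG2 Θ I) {θs ϑs : ℕ → E}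
    (hθs : ∀ n, θs n ∈ Θ) (hϑs : ∀ n, ϑs n ∈ sublevelSet I (θs n) r)
    (hθ : Tendsto (fun n => ‖θs n‖) atTop atTop) :
    ¬ Tendsto (fun n => ‖ϑs n‖ / ‖θs n‖) atTop atTop := fun hratio => by
  have hle : limsup (fun n => I (θs n) (ϑs n)) atTop ≤ ENNReal.ofReal r :=
    limsup_le_of_le (by isBoundedDefault) (Eventually.of_forall hϑs)
  rw [hG2 θs ϑs hθs hθ hratio, top_le_iff] at hle
  exact ENNReal.ofReal_ne_top hle

omit [NormedSpace ℝ E] in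
lemma exists_norm_le_mul_of_mem_sublevelSet (hG1 : GrowthG1 Θ I) (hG2 : GrowthG2 Θ I) (r : ℝ) :
    ∃ C, 0 ≤ C ∧ ∀ θ ∈ Θ, ∀ ϑ ∈ sublevelSet I θ r, ‖ϑ‖ ≤ C * (1 + ‖θ‖) := by
  by_contra! h
  choose θs hθs ϑs hϑs hlt using fun n : ℕ => h n n.cast_nonneg
  have hϑ : Tendsto (fun n => ‖ϑs n‖) atTop atTop :=
    tendsto_atTop_mono' _ (Eventually.of_forall fun n =>
      (le_mul_of_one_le_right n.cast_nonneg (le_add_of_nonneg_right (norm_nonneg _))).trans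
        (hlt n).le) tendsto_natCast_atTop_atTop
  have hθ := hG1.tendsto_norm_atTop hθs hϑs hϑ
  refine hG2.not_tendsto_norm_div hθs hϑs hθ (tendsto_atTop_mono' _ ?_ tendsto_natCast_atTop_atTop)
  filter_upwards [hθ.eventually_gt_atTop 0] with n hn
  rw [le_div_iff₀ hn]
  nlinarith [hlt n, (n.cast_nonneg : (0 : ℝ) ≤ n)]

end RateFunction

section ConfidenceSet

variable {Θ : Set E} {I : E → E → ENNReal} {r δ : ℝ} {a : ℝ → ℝ}

lemma mem_confidenceSet_self {T : ℝ} {θ' : E} (hθ' : θ' ∈ Θ) (hI : I θ' 0 = 0) (hδ : 0 ≤ δ) :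
    θ' ∈ confidenceSet Θ I r δ a T θ' :=
  ⟨hθ', by simpa only [sub_self, smul_zero] using zero_mem_fatSublevel hI hδ⟩

lemma confidenceSet_subset_closedBall {C T : ℝ} (hC : 0 ≤ C)
    (hgrowth : ∀ θ ∈ Θ, ∀ ϑ ∈ sublevelSet I θ r, ‖ϑ‖ ≤ C * (1 + ‖θ‖)) (ha : C < a T) (θ' : E) :
    confidenceSet Θ I r δ a T θ' ⊆ closedBall θ' ((C * (1 + ‖θ'‖) + |δ|) / (a T - C)) := by
  rintro θ ⟨hθ, hmem⟩
  obtain ⟨ϑ, hϑ, hnear⟩ := exists_mem_sublevelSet_norm_sub_le_of_mem_fatSublevel hmem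
  have hsmul : ‖a T • (θ' - θ)‖ = a T * ‖θ' - θ‖ := by
    rw [norm_smul, Real.norm_of_nonneg (hC.trans ha.le)]
  have hfar : a T * ‖θ' - θ‖ ≤ ‖ϑ‖ + |δ| := by
    rw [← hsmul]
    linarith [norm_le_norm_add_norm_sub' (a T • (θ' - θ)) ϑ]
  have hθnorm : C * (1 + ‖θ‖) ≤ C * (1 + ‖θ'‖ + ‖θ' - θ‖) := by
    refine mul_le_mul_of_nonneg_left ?_ hC
    linarith [norm_le_norm_add_norm_sub θ' θ, norm_sub_rev θ θ']
  rw [mem_closedBall, dist_eq_norm', le_div_iff₀ (sub_pos.2 ha)]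
  linarith [hgrowth θ hθ ϑ hϑ]

lemma tendsto_confidenceSet_smallSets (hG1 : GrowthG1 Θ I) (hG2 : GrowthG2 Θ I)
    (ha : Tendsto a atTop atTop) {f : ℝ → E} {θ0 : E} (hf : Tendsto f atTop (𝓝 θ0)) :
    Tendsto (fun T => confidenceSet Θ I r δ a T (f T)) atTop (𝓝 θ0).smallSets := by
  obtain ⟨C, hC, hgrowth⟩ := exists_norm_le_mul_of_mem_sublevelSet hG1 hG2 r
  set ρ : ℝ → ℝ := fun T => (C * (1 + ‖f T‖) + |δ|) / (a T - C)
  have hρ : Tendsto ρ atTop (𝓝 0) :=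
    ((tendsto_const_nhds.add hf.norm).const_mul C |>.add_const |δ|).div_atTop
      (tendsto_atTop_add_const_right _ (-C) ha)
  have hradius : Tendsto (fun T => dist (f T) θ0 + ρ T) atTop (𝓝 0) := by
    simpa using (tendsto_iff_dist_tendsto_zero.1 hf).add hρ
  refine ((tendsto_closedBall_smallSets θ0).comp hradius).smallSets_mono ?_
  filter_upwards [ha.eventually_gt_atTop C] with T hT
  exact (confidenceSet_subset_closedBall hC hgrowth hT (f T)).trans
    (closedBall_subset_closedBall' (by rw [add_comm]))

end ConfidenceSet

section Supremum

variable {α : Type*} {l : Filter α} {t : α → Set ℝ} {y : ℝ}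

lemma tendsto_csSup_of_tendsto_smallSets (ht : Tendsto t l (𝓝 y).smallSets)
    (hne : ∀ᶠ i in l, (t i).Nonempty) : Tendsto (fun i => sSup (t i)) l (𝓝 y) := by
  refine nhds_basis_closedBall.tendsto_right_iff.2 fun ε hε => ?_
  filter_upwards [tendsto_smallSets_iff.1 ht _ (closedBall_mem_nhds y hε), hne] with i hsub hi
  exact closure_minimal hsub isClosed_closedBall
    (csSup_mem_closure hi (isBounded_closedBall.subset hsub).bddAbove)

lemma tendsto_csInf_of_tendsto_smallSets (ht : Tendsto t l (𝓝 y).smallSets)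
    (hne : ∀ᶠ i in l, (t i).Nonempty) : Tendsto (fun i => sInf (t i)) l (𝓝 y) := by
  refine nhds_basis_closedBall.tendsto_right_iff.2 fun ε hε => ?_
  filter_upwards [tendsto_smallSets_iff.1 ht _ (closedBall_mem_nhds y hε), hne] with i hsub hi
  exact closure_minimal hsub isClosed_closedBall
    (csInf_mem_closure hi (isBounded_closedBall.subset hsub).bddBelow)

end Supremum

section ConfidenceBounds

variable {Θ : Set E} {I : E → E → ENNReal} {J : E → ℝ} {r δ : ℝ} {a : ℝ → ℝ} {f : ℝ → E}
  {θ0 : E}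

lemma tendsto_image_confidenceSet_smallSets (hG1 : GrowthG1 Θ I) (hG2 : GrowthG2 Θ I)
    (ha : Tendsto a atTop atTop) (hf : Tendsto f atTop (𝓝 θ0)) (hJ : ContinuousWithinAt J Θ θ0) :
    Tendsto (fun T => J '' confidenceSet Θ I r δ a T (f T)) atTop (𝓝 (J θ0)).smallSets := by
  refine hJ.image_smallSets.comp ?_
  rw [nhdsWithin, smallSets_inf, smallSets_principal, tendsto_inf, tendsto_principal]
  exact ⟨tendsto_confidenceSet_smallSets hG1 hG2 ha hf,
    Eventually.of_forall fun _ _ hθ => hθ.1⟩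

lemma confidenceSet_nonempty (hfΘ : ∀ᶠ T in atTop, f T ∈ Θ) (hI0 : ∀ θ ∈ Θ, I θ 0 = 0)
    (hδ : 0 ≤ δ) : ∀ᶠ T in atTop, (J '' confidenceSet Θ I r δ a T (f T)).Nonempty :=
  hfΘ.mono fun _ hT => ⟨_, mem_image_of_mem J (mem_confidenceSet_self hT (hI0 _ hT) hδ)⟩

lemma tendsto_upperCB (hG1 : GrowthG1 Θ I) (hG2 : GrowthG2 Θ I) (ha : Tendsto a atTop atTop)
    (hf : Tendsto f atTop (𝓝 θ0)) (hJ : ContinuousWithinAt J Θ θ0)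
    (hfΘ : ∀ᶠ T in atTop, f T ∈ Θ) (hI0 : ∀ θ ∈ Θ, I θ 0 = 0) (hδ : 0 ≤ δ) :
    Tendsto (fun T => upperCB Θ I J r δ a T (f T)) atTop (𝓝 (J θ0)) :=
  tendsto_csSup_of_tendsto_smallSets (tendsto_image_confidenceSet_smallSets hG1 hG2 ha hf hJ)
    (confidenceSet_nonempty hfΘ hI0 hδ)

lemma tendsto_lowerCB (hG1 : GrowthG1 Θ I) (hG2 : GrowthG2 Θ I) (ha : Tendsto a atTop atTop)
    (hf : Tendsto f atTop (𝓝 θ0)) (hJ : ContinuousWithinAt J Θ θ0)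
    (hfΘ : ∀ᶠ T in atTop, f T ∈ Θ) (hI0 : ∀ θ ∈ Θ, I θ 0 = 0) (hδ : 0 ≤ δ) :
    Tendsto (fun T => lowerCB Θ I J r δ a T (f T)) atTop (𝓝 (J θ0)) :=
  tendsto_csInf_of_tendsto_smallSets (tendsto_image_confidenceSet_smallSets hG1 hG2 ha hf hJ)
    (confidenceSet_nonempty hfΘ hI0 hδ)

end ConfidenceBounds

lemma eventually_not_subset_of_limsup_lt_liminf {ι : Type*} {l : Filter ι} {P : Measure Ω}
    {A B : ι → Set Ω} {c : ι → ℝ} (hc : ∀ i, 0 ≤ c i)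
    (h : limsup (fun i => (c i : EReal) * ENNReal.log (P (B i))) l <
      liminf (fun i => (c i : EReal) * ENNReal.log (P (A i))) l) :
    ∀ᶠ i in l, ¬ A i ⊆ B i := by
  obtain ⟨z, hBz, hzA⟩ := exists_between h
  filter_upwards [eventually_lt_of_limsup_lt hBz, eventually_lt_of_lt_liminf hzA] with i hB hA hAB
  have hmono : (c i : EReal) * ENNReal.log (P (A i)) ≤ (c i : EReal) * ENNReal.log (P (B i)) :=
    mul_le_mul_of_nonneg_left (ENNReal.log_monotone (measure_mono hAB)) (EReal.coe_nonneg.2 (hc i))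
  exact lt_irrefl z ((hA.trans_le hmono).trans hB)

lemma LDPLowerAt.eventually_exists_mem_ball_not_mem {P : Measure Ω} {θhat : ℝ → Ω → E}
    {a b : ℝ → ℝ} {Irate : E → ENNReal} {θ0 : E} (hLDP : LDPLowerAt P θhat a b Irate θ0)
    (hI0 : Irate 0 = 0) (hb : ∀ T, 0 ≤ b T) {r : ℝ} (hr : 0 < r) {bad : ℝ → Set Ω}
    (hbad : limsup (fun T => (((b T)⁻¹ : ℝ) : EReal) * ENNReal.log (P (bad T))) atTop ≤
      ((-r : ℝ) : EReal)) :
    ∀ᶠ T in atTop, ∃ ω, a T • (θhat T ω - θ0) ∈ ball (0 : E) 1 ∧ ω ∉ bad T := by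
  have hball : (⨅ ϑ ∈ ball (0 : E) 1, Irate ϑ) = 0 :=
    nonpos_iff_eq_zero.1 ((iInf₂_le 0 (mem_ball_self one_pos)).trans hI0.le)
  have hlower := hLDP (ball 0 1) isOpen_ball
  rw [hball, EReal.coe_ennreal_zero, neg_zero] at hlower
  have hlt : limsup (fun T => (((b T)⁻¹ : ℝ) : EReal) * ENNReal.log (P (bad T))) atTop <
      liminf (fun T => (((b T)⁻¹ : ℝ) : EReal) *
        ENNReal.log (P {ω | a T • (θhat T ω - θ0) ∈ ball (0 : E) 1})) atTop :=
    hbad.trans_lt ((EReal.coe_lt_coe_iff.2 (neg_neg_of_pos hr)).trans_le hlower)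
  filter_upwards [eventually_not_subset_of_limsup_lt_liminf (fun T => inv_nonneg.2 (hb T)) hlt]
    with T hT
  simpa [not_subset] using hT

lemma tendsto_of_eventually_norm_smul_sub_lt {a : ℝ → ℝ} (ha : Tendsto a atTop atTop)
    {g : ℝ → E} {x : E} (hg : ∀ᶠ T in atTop, ‖a T • (g T - x)‖ < 1) :
    Tendsto g atTop (𝓝 x) := by
  refine tendsto_iff_norm_sub_tendsto_zero.2 <|
    squeeze_zero' (Eventually.of_forall fun _ => norm_nonneg _) ?_ ha.inv_tendsto_atTop
  filter_upwards [hg, ha.eventually_gt_atTop 0] with T hT haT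
  rw [norm_smul, Real.norm_of_nonneg haT.le] at hT
  rw [Pi.inv_apply, ← one_div, le_div_iff₀' haT]
  exact hT.le

lemma EvEquicontinuousAt.eventually_abs_sub_lt {W : Type*} [PseudoMetricSpace W]
    {φ : ℝ → W → ℝ} {w0 : W} (hφ : EvEquicontinuousAt φ w0) {f g : ℝ → W}
    (hf : Tendsto f atTop (𝓝 w0)) (hg : Tendsto g atTop (𝓝 w0)) {ε : ℝ} (hε : 0 < ε) :
    ∀ᶠ T in atTop, |φ T (f T) - φ T (g T)| < ε := by
  obtain ⟨η, hη, T0, -, hT0⟩ := hφ (ε / 2) (half_pos hε)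
  filter_upwards [hf (closedBall_mem_nhds w0 hη), hg (closedBall_mem_nhds w0 hη),
    eventually_ge_atTop T0] with T hfT hgT hT
  have hf' := abs_lt.1 (hT0 T hT _ hfT)
  have hg' := abs_lt.1 (hT0 T hT _ hgT)
  exact abs_lt.2 ⟨by linarith, by linarith⟩

lemma EReal.limsup_coe_le_zero {α : Type*} {l : Filter α} {u : α → ℝ}
    (h : ∀ ε > 0, ∀ᶠ i in l, u i ≤ ε) : limsup (fun i => (u i : EReal)) l ≤ 0 := by
  refine EReal.le_of_forall_lt_iff_le.1 fun ε hε => limsup_le_of_le (by isBoundedDefault) ?_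
  exact (h ε (EReal.coe_pos.1 hε)).mono fun i hi => EReal.coe_le_coe_iff.2 hi

lemma EReal.zero_le_liminf_coe {α : Type*} {l : Filter α} {u : α → ℝ}
    (h : ∀ ε > 0, ∀ᶠ i in l, -ε ≤ u i) : 0 ≤ liminf (fun i => (u i : EReal)) l := by
  refine EReal.ge_of_forall_gt_iff_ge.1 fun ε hε => le_liminf_of_le (by isBoundedDefault) ?_
  exact (h (-ε) (neg_pos.2 (EReal.coe_neg'.1 hε))).mono fun i hi =>
    EReal.coe_le_coe_iff.2 (by simpa using hi)

theorem stmt14_general (Θ : Set E) (I : E → E → ENNReal) (J : E → ℝ)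
    (P : E → Measure Ω)
    (θhat : ℝ → Ω → E)
    (b a : ℝ → ℝ) (hbpos : ∀ T, 0 < b T)
    (hatop : Tendsto a atTop atTop)
    (hG1 : GrowthG1 Θ I) (hG2 : GrowthG2 Θ I)
    (hI0 : ∀ θ ∈ Θ, I θ 0 = 0)
    (hJ : ∀ a0 > (0 : ℝ), ∀ θ0 ∈ Θ, UniformContinuousOn J (Metric.closedBall θ0 a0 ∩ Θ))
    (hLDPlow : ∀ θ ∈ Θ, LDPLowerAt (P θ) θhat a b (I θ) θ)
    (hdom : IsOpen Θ ∨ ∀ T > (0 : ℝ), ∀ ω : Ω, θhat T ω ∈ Θ)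
    (r δ : ℝ) (hr : 0 < r) (hδ : 0 < δ)
    (Hbar Hlow : ℝ → E → ℝ)
    (hHbarequi : ∀ w0 : E, EvEquicontinuousAt Hbar w0)
    (hHlowequi : ∀ w0 : E, EvEquicontinuousAt Hlow w0)
    (haccurate : ∀ θ ∈ Θ,
      Filter.limsup
        (fun T => (((b T)⁻¹ : ℝ) : EReal) *
          ENNReal.log (P θ {ω | ¬(Hlow T (θhat T ω) ≤ J θ ∧ J θ ≤ Hbar T (θhat T ω))}))
        atTop ≤ ((-r : ℝ) : EReal))
    (θ0 : E) (hθ0 : θ0 ∈ Θ)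
    (hcons : ∀ᵐ ω ∂(P θ0), Tendsto (fun T => θhat T ω) atTop (nhds θ0)) :
    ∀ᵐ ω ∂(P θ0),
      Filter.limsup
          (fun T => ((upperCB Θ I J r δ a T (θhat T ω) - Hbar T (θhat T ω) : ℝ) : EReal))
          atTop ≤ 0 ∧
      (0 : EReal) ≤
        Filter.liminf
          (fun T => ((lowerCB Θ I J r δ a T (θhat T ω) - Hlow T (θhat T ω) : ℝ) : EReal))
          atTop := by
  obtain ⟨ω', hω'⟩ := ((hLDPlow θ0 hθ0).eventually_exists_mem_ball_not_mem (hI0 θ0 hθ0)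
    (fun T => (hbpos T).le) hr (haccurate θ0 hθ0)).choice
  have hω'θ0 : Tendsto (fun T => θhat T (ω' T)) atTop (𝓝 θ0) :=
    tendsto_of_eventually_norm_smul_sub_lt hatop (hω'.mono fun T hT => mem_ball_zero_iff.1 hT.1)
  have hJθ0 : ContinuousWithinAt J Θ θ0 := by
    have h := (hJ 1 one_pos θ0 hθ0).continuousOn.continuousWithinAt
      ⟨mem_closedBall_self zero_le_one, hθ0⟩
    rwa [inter_comm, continuousWithinAt_inter (closedBall_mem_nhds θ0 one_pos)] at h
  filter_upwards [hcons] with ω hω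
  have hΘ : ∀ᶠ T in atTop, θhat T ω ∈ Θ :=
    hdom.elim (fun hopen => hω.eventually_mem (hopen.mem_nhds hθ0))
      (fun hin => (eventually_gt_atTop 0).mono fun T hT => hin T hT ω)
  refine ⟨EReal.limsup_coe_le_zero fun ε hε => ?_, EReal.zero_le_liminf_coe fun ε hε => ?_⟩
  · have hupper := tendsto_upperCB (r := r) hG1 hG2 hatop hω hJθ0 hΘ hI0 hδ.le
    filter_upwards [hupper.eventually (eventually_le_nhds (lt_add_of_pos_right _ (half_pos hε))),
      (hHbarequi θ0).eventually_abs_sub_lt hω hω'θ0 (half_pos hε), hω'] with T hCB hH hgood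
    linarith [(abs_lt.1 hH).1, (not_not.1 hgood.2).2]
  · have hlower := tendsto_lowerCB (r := r) hG1 hG2 hatop hω hJθ0 hΘ hI0 hδ.le
    filter_upwards [hlower.eventually (eventually_ge_nhds (sub_lt_self _ (half_pos hε))),
      (hHlowequi θ0).eventually_abs_sub_lt hω hω'θ0 (half_pos hε), hω'] with T hCB hH hgood
    linarith [(abs_lt.1 hH).2, (not_not.1 hgood.2).1]

/-- almost sure eventual containment: if `(H̲_T, H̄_T)` define an
exponentially accurate, eventually equicontinuous interval family and `θ̂_T → θ0`
`P_{θ0}`-a.s., then `P_{θ0}`-a.s.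
`limsup (J̄^δ_{T,r}(θ̂_T) − H̄_T(θ̂_T)) ≤ 0` and `liminf (J̲^δ_{T,r}(θ̂_T) − H̲_T(θ̂_T)) ≥ 0`. -/
theorem stmt14 (Θ : Set E) (hΘ : Θ.Nonempty) (I : E → E → ENNReal) (J : E → ℝ)
    [MeasurableSpace E] [BorelSpace E]
    (P : E → Measure Ω) (hP : ∀ θ, IsProbabilityMeasure (P θ))
    (θhat : ℝ → Ω → E) (hθhatmeas : ∀ T, Measurable (θhat T))
    (b a : ℝ → ℝ) (hbpos : ∀ T, 0 < b T) (hbtop : Tendsto b atTop atTop)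
    (hadef : ∀ T, a T = Real.sqrt (T / b T)) (hatop : Tendsto a atTop atTop)
    (hG1 : GrowthG1 Θ I) (hG2 : GrowthG2 Θ I)
    (hI0 : ∀ θ ∈ Θ, I θ 0 = 0)
    (hJ : ∀ a0 > (0 : ℝ), ∀ θ0 ∈ Θ, UniformContinuousOn J (Metric.closedBall θ0 a0 ∩ Θ))
    (hLDPlow : ∀ θ ∈ Θ, LDPLowerAt (P θ) θhat a b (I θ) θ)
    (hdom : IsOpen Θ ∨ ∀ T > (0 : ℝ), ∀ ω : Ω, θhat T ω ∈ Θ)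
    (r δ : ℝ) (hr : 0 < r) (hδ : 0 < δ)
    (Hbar Hlow : ℝ → E → ℝ)
    (hHbarmeas : ∀ T, Measurable (Hbar T)) (hHlowmeas : ∀ T, Measurable (Hlow T))
    (hHbarequi : ∀ w0 : E, EvEquicontinuousAt Hbar w0)
    (hHlowequi : ∀ w0 : E, EvEquicontinuousAt Hlow w0)
    (haccurate : ∀ θ ∈ Θ,
      Filter.limsup
        (fun T => (((b T)⁻¹ : ℝ) : EReal) *
          ENNReal.log (P θ {ω | ¬(Hlow T (θhat T ω) ≤ J θ ∧ J θ ≤ Hbar T (θhat T ω))}))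
        atTop ≤ ((-r : ℝ) : EReal))
    (θ0 : E) (hθ0 : θ0 ∈ Θ)
    (hcons : ∀ᵐ ω ∂(P θ0), Tendsto (fun T => θhat T ω) atTop (nhds θ0)) :
    ∀ᵐ ω ∂(P θ0),
      Filter.limsup
          (fun T => ((upperCB Θ I J r δ a T (θhat T ω) - Hbar T (θhat T ω) : ℝ) : EReal))
          atTop ≤ 0 ∧
      (0 : EReal) ≤
        Filter.liminf
          (fun T => ((lowerCB Θ I J r δ a T (θhat T ω) - Hlow T (θhat T ω) : ℝ) : EReal))
          atTop :=
  stmt14_general Θ I J P θhat b a hbpos hatop hG1 hG2 hI0 hJ hLDPlow hdom r δ hr hδ Hbar Hlow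
    hHbarequi hHlowequi haccurate θ0 hθ0 hcons
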